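/- arXiv:1306.1769 — 4 statements merged into one kernel-verified Lean document; each statement's English description precedes it below -/
import Mathlib

section
/- Let ℓmin, ℓmax be positive reals with ℓmin ≤ ℓmax, let ρ = ℓmax/ℓmin, γ̄ = ⌊ρ⌋ and γ̂ = ⌈ρ⌉ − 1. Let p₁ be a natural number and p₂ : ℕ → ℕ a function supported on {1, …, γ̄} (i.e., p₂ j = 0 for j = 0 and for j > γ̄), such that ∑_{j=1}^{γ̄} j · p₂ j ≤ γ̂ · p₁ and such that ℓmax · ∑_{j=1}^{γ̄} p₂ j + ℓmin · γ̂ · p₁ > 0. Then (ℓmin · ∑_{j=1}^{γ̄} j · p₂ j) / (ℓmax · ∑_{j=1}^{γ̄} p₂ j + ℓmin · γ̂ · p₁) ≤ γ̄ / (ρ + γ̄). -/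
/-!
Writing `ℓmax = ρ ℓmin`, the factor `ℓmin` cancels and the ratio becomes `T / (ρ S + γ̂ p₁)` with
`T = ∑ j p₂ j` and `S = ∑ p₂ j`. Every phase of the second kind transmits at most `γ̄` packets, so
`T ≤ γ̄ S`, and by hypothesis `T ≤ γ̂ p₁`; hence `(ρ + γ̄) T ≤ γ̄ (ρ S + γ̂ p₁)`.
-/

open Finset

lemma sum_mul_le_mul_sum_of_le {s : Finset ℕ} {n : ℕ} (hs : ∀ j ∈ s, j ≤ n) {w : ℕ → ℝ}
    (hw : ∀ j ∈ s, 0 ≤ w j) : ∑ j ∈ s, (j : ℝ) * w j ≤ n * ∑ j ∈ s, w j := by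
  rw [mul_sum]
  exact sum_le_sum fun j hj => mul_le_mul_of_nonneg_right (by exact_mod_cast hs j hj) (hw j hj)

lemma div_le_div_add_of_le_mul_of_le {ρ g T S Q : ℝ} (hρ : 0 < ρ) (hg : 0 ≤ g)
    (hTS : T ≤ g * S) (hTQ : T ≤ Q) (hden : 0 < ρ * S + Q) :
    T / (ρ * S + Q) ≤ g / (ρ + g) := by
  rw [div_le_div_iff₀ hden (by positivity)]
  nlinarith [mul_le_mul_of_nonneg_left hTS hρ.le, mul_le_mul_of_nonneg_left hTQ hg]

theorem relative_throughput_adversarial_upper_bound_general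
    (ℓmin ℓmax : ℝ) (hℓmin : 0 < ℓmin) (hle : ℓmin ≤ ℓmax)
    (ρ : ℝ) (hρ : ρ = ℓmax / ℓmin)
    (γbar γhat : ℕ)
    (p₁ : ℕ) (p₂ : ℕ → ℕ)
    (hsum : (∑ j ∈ Finset.Icc 1 γbar, j * p₂ j) ≤ γhat * p₁)
    (hpos : 0 < ℓmax * (∑ j ∈ Finset.Icc 1 γbar, (p₂ j : ℝ))
              + ℓmin * (γhat : ℝ) * (p₁ : ℝ)) :
    (ℓmin * ∑ j ∈ Finset.Icc 1 γbar, (j : ℝ) * (p₂ j : ℝ)) /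
      (ℓmax * (∑ j ∈ Finset.Icc 1 γbar, (p₂ j : ℝ))
        + ℓmin * (γhat : ℝ) * (p₁ : ℝ))
      ≤ (γbar : ℝ) / (ρ + (γbar : ℝ)) := by
  have hℓmax : ℓmax = ℓmin * ρ := by rw [hρ, mul_div_cancel₀ _ hℓmin.ne']
  have hρpos : 0 < ρ := by rw [hρ]; exact div_pos (hℓmin.trans_le hle) hℓmin
  have hTQ : ∑ j ∈ Icc 1 γbar, (j : ℝ) * (p₂ j : ℝ) ≤ γhat * p₁ := by exact_mod_cast hsum
  have hTS := sum_mul_le_mul_sum_of_le (s := Icc 1 γbar) (fun j hj => (mem_Icc.mp hj).2)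
    (w := fun j => (p₂ j : ℝ)) fun j _ => Nat.cast_nonneg _
  rw [hℓmax, mul_assoc, mul_assoc, ← mul_add] at hpos ⊢
  rw [mul_div_mul_left _ _ hℓmin.ne']
  exact div_le_div_add_of_le_mul_of_le hρpos (Nat.cast_nonneg _) hTS hTQ
    (pos_of_mul_pos_right hpos hℓmin.le)

/-- Algebraic core of the adversarial-arrivals upper bound (Theorem 2 of the paper). -/
theorem relative_throughput_adversarial_upper_bound
    (ℓmin ℓmax : ℝ) (hℓmin : 0 < ℓmin) (hle : ℓmin ≤ ℓmax)
    (ρ : ℝ) (hρ : ρ = ℓmax / ℓmin)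
    (γbar γhat : ℕ) (hγbar : γbar = ⌊ρ⌋₊) (hγhat : γhat = ⌈ρ⌉₊ - 1)
    (p₁ : ℕ) (p₂ : ℕ → ℕ)
    (hsupp : ∀ j : ℕ, (j = 0 ∨ γbar < j) → p₂ j = 0)
    (hsum : (∑ j ∈ Finset.Icc 1 γbar, j * p₂ j) ≤ γhat * p₁)
    (hpos : 0 < ℓmax * (∑ j ∈ Finset.Icc 1 γbar, (p₂ j : ℝ))
              + ℓmin * (γhat : ℝ) * (p₁ : ℝ)) :
    (ℓmin * ∑ j ∈ Finset.Icc 1 γbar, (j : ℝ) * (p₂ j : ℝ)) /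
      (ℓmax * (∑ j ∈ Finset.Icc 1 γbar, (p₂ j : ℝ))
        + ℓmin * (γhat : ℝ) * (p₁ : ℝ))
      ≤ (γbar : ℝ) / (ρ + (γbar : ℝ)) :=
  relative_throughput_adversarial_upper_bound_general ℓmin ℓmax hℓmin hle ρ hρ γbar γhat p₁ p₂ hsum
    hpos
end

section
/- Let ℓmin, ℓmax be positive reals with ℓmin ≤ ℓmax, ρ = ℓmax/ℓmin, γ̄ = ⌊ρ⌋ and γ̂ = ⌈ρ⌉ − 1. Let r₂ : ℕ → ℕ be supported on {1, …, γ̄} and r₁ : ℕ → ℕ be supported on {1, …, γ̂}, and assume ℓmax · ∑_{j=1}^{γ̄} r₂ j + ℓmin · ∑_{j=1}^{γ̂} j · r₁ j > 0. Then (ℓmin · ∑_{j=1}^{γ̄} j · r₂ j) / (ℓmax · ∑_{j=1}^{γ̄} r₂ j + ℓmin · ∑_{j=1}^{γ̂} j · r₁ j) ≤ γ̄ / ρ. -/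
/-! Every `j` in the range of the first sum is at most `γ̄`, so the numerator is at most
`γ̄ ℓmin ∑ r₂ j = (γ̄ / ρ) · ℓmax ∑ r₂ j`, and the `r₁` term only enlarges the denominator. -/

open Finset

theorem sum_Icc_natCast_mul_le_mul_sum (a n : ℕ) {f : ℕ → ℝ} (hf : ∀ j ∈ Icc a n, 0 ≤ f j) :
    ∑ j ∈ Icc a n, (j : ℝ) * f j ≤ n * ∑ j ∈ Icc a n, f j := by
  rw [mul_sum]
  refine sum_le_sum fun j hj => mul_le_mul_of_nonneg_right ?_ (hf j hj)
  exact_mod_cast (mem_Icc.mp hj).2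

theorem mul_div_add_le_div_div {a b A B C γ : ℝ} (ha : 0 < a) (hb : 0 < b) (hγ : 0 ≤ γ)
    (hB : B ≤ γ * A) (hC : 0 ≤ C) (hpos : 0 < b * A + a * C) :
    a * B / (b * A + a * C) ≤ γ / (b / a) := by
  rw [div_div_eq_mul_div, div_le_div_iff₀ hpos hb]
  calc a * B * b ≤ a * (γ * A) * b := by gcongr
    _ = γ * a * (b * A) := by ring
    _ ≤ γ * a * (b * A + a * C) := by gcongr; exact le_add_of_nonneg_right (by positivity)

theorem relative_throughput_stochastic_upper_bound_general
    (ℓmin ℓmax : ℝ) (hℓmin : 0 < ℓmin) (hle : ℓmin ≤ ℓmax)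
    (ρ : ℝ) (hρ : ρ = ℓmax / ℓmin)
    (γbar γhat : ℕ)
    (r₁ r₂ : ℕ → ℕ)
    (hpos : 0 < ℓmax * (∑ j ∈ Finset.Icc 1 γbar, (r₂ j : ℝ))
              + ℓmin * (∑ j ∈ Finset.Icc 1 γhat, (j : ℝ) * (r₁ j : ℝ))) :
    (ℓmin * ∑ j ∈ Finset.Icc 1 γbar, (j : ℝ) * (r₂ j : ℝ)) /
      (ℓmax * (∑ j ∈ Finset.Icc 1 γbar, (r₂ j : ℝ))
        + ℓmin * (∑ j ∈ Finset.Icc 1 γhat, (j : ℝ) * (r₁ j : ℝ)))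
      ≤ (γbar : ℝ) / ρ := by
  subst hρ
  exact mul_div_add_le_div_div hℓmin (hℓmin.trans_le hle) γbar.cast_nonneg
    (sum_Icc_natCast_mul_le_mul_sum 1 γbar fun j _ => (r₂ j).cast_nonneg)
    (sum_nonneg fun j _ => by positivity) hpos

/-- Algebraic core of the stochastic-arrivals upper bound: no algorithm has relative
throughput larger than `γ̄/ρ`. -/
theorem relative_throughput_stochastic_upper_bound
    (ℓmin ℓmax : ℝ) (hℓmin : 0 < ℓmin) (hle : ℓmin ≤ ℓmax)
    (ρ : ℝ) (hρ : ρ = ℓmax / ℓmin)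
    (γbar γhat : ℕ) (hγbar : γbar = ⌊ρ⌋₊) (hγhat : γhat = ⌈ρ⌉₊ - 1)
    (r₁ r₂ : ℕ → ℕ)
    (hsupp₂ : ∀ j : ℕ, (j = 0 ∨ γbar < j) → r₂ j = 0)
    (hsupp₁ : ∀ j : ℕ, (j = 0 ∨ γhat < j) → r₁ j = 0)
    (hpos : 0 < ℓmax * (∑ j ∈ Finset.Icc 1 γbar, (r₂ j : ℝ))
              + ℓmin * (∑ j ∈ Finset.Icc 1 γhat, (j : ℝ) * (r₁ j : ℝ))) :
    (ℓmin * ∑ j ∈ Finset.Icc 1 γbar, (j : ℝ) * (r₂ j : ℝ)) /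
      (ℓmax * (∑ j ∈ Finset.Icc 1 γbar, (r₂ j : ℝ))
        + ℓmin * (∑ j ∈ Finset.Icc 1 γhat, (j : ℝ) * (r₁ j : ℝ)))
      ≤ (γbar : ℝ) / ρ :=
  relative_throughput_stochastic_upper_bound_general ℓmin ℓmax hℓmin hle ρ hρ γbar γhat r₁ r₂ hpos
end

section
/- Let ℓmin > 0 and ρ ≥ 1 be real numbers, set ℓmax = ρ·ℓmin and let γ̄ = ⌊ρ⌋ (as a real number, so γ̄ ≥ 1). Let a, b, c, a*, b* be nonnegative reals satisfying a* ≤ (a + c) + (γ̄ − 1) and b* ≤ b + c/γ̄ + 2. Then (a + c)·ℓmin + b·ℓmax ≥ (γ̄/(ρ + γ̄)) · ((a*·ℓmin + b*·ℓmax) − 3·ℓmax). -/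
/-- Amortization at the heart of Case 2 of the analysis of algorithm SL-Preamble:
given the two lemma bounds on OPT's packet counts, SL-Preamble's transmitted length is
at least `γ̄/(ρ + γ̄)` times OPT's transmitted length minus `3·ℓmax` (scaled). -/
theorem slpreamble_amortization
    (ℓmin ρ : ℝ) (hℓmin : 0 < ℓmin) (hρ : 1 ≤ ρ)
    (ℓmax : ℝ) (hℓmax : ℓmax = ρ * ℓmin)
    (γ : ℝ) (hγ : γ = (⌊ρ⌋ : ℝ))
    (a b c astar bstar : ℝ)
    (ha : 0 ≤ a) (hb : 0 ≤ b) (hc : 0 ≤ c) (hastar : 0 ≤ astar) (hbstar : 0 ≤ bstar)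
    (hmin : astar ≤ (a + c) + (γ - 1))
    (hmax : bstar ≤ b + c / γ + 2) :
    (a + c) * ℓmin + b * ℓmax ≥
      (γ / (ρ + γ)) * ((astar * ℓmin + bstar * ℓmax) - 3 * ℓmax) := by
  have hγ1 : 1 ≤ γ := by
    rw [hγ]
    exact_mod_cast Int.le_floor.mpr (by exact_mod_cast hρ)
  have hγρ : γ ≤ ρ := by rw [hγ]; exact Int.floor_le ρ
  have hγpos : 0 < γ := lt_of_lt_of_le one_pos hγ1
  have hsum : 0 < ρ + γ := by linarith
  have hcdiv : c / γ * γ = c := div_mul_cancel₀ c (ne_of_gt hγpos)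
  rw [ge_iff_le, div_mul_eq_mul_div, div_le_iff₀ hsum]
  have hbs : bstar * γ ≤ (b + c / γ + 2) * γ :=
    mul_le_mul_of_nonneg_right hmax (le_of_lt hγpos)
  have hbs' : bstar * γ ≤ b * γ + c + 2 * γ := by
    calc bstar * γ ≤ (b + c / γ + 2) * γ := hbs
    _ = b * γ + c / γ * γ + 2 * γ := by ring
    _ = b * γ + c + 2 * γ := by rw [hcdiv]
  subst hℓmax
  nlinarith [mul_le_mul_of_nonneg_right hmin (mul_nonneg hγpos.le hℓmin.le),
    mul_le_mul_of_nonneg_right hbs' (mul_nonneg (by linarith : (0:ℝ) ≤ ρ) hℓmin.le),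
    mul_nonneg (mul_nonneg ha hℓmin.le) (by linarith : (0:ℝ) ≤ ρ),
    mul_nonneg (mul_nonneg hb hℓmin.le) (by nlinarith : (0:ℝ) ≤ ρ * ρ),
    mul_nonneg (mul_nonneg hγpos.le hℓmin.le) (by linarith : (0:ℝ) ≤ ρ - γ + 1)]
end

section
/- Let ℓmin, ℓmax > 0 be reals with ℓmin ≤ ℓmax, let ρ = ℓmax/ℓmin and γ̄ = ⌊ρ⌋ ≥ 1 (as a real). Let m be a real with m > ρ and let s be a real with 0 ≤ s ≤ m. Then (s·ℓmin) / ((s/γ̄ − 1)·ℓmax + m·ℓmin) ≤ (m·γ̄) / (m·(ρ + γ̄) − ρ·γ̄), where both denominators are positive under these hypotheses. -/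
/-!
Writing `ℓmax = ρ·ℓmin` and cancelling `ℓmin` (resp. `γ`), both sides have the form
`x / (b·x + c)` with `b = ρ/γ ≥ 0` and `c = m − ρ > 0`, at `x = s` and `x = m` respectively.
That function is increasing on `x ≥ 0`, and `s ≤ m`.
-/

theorem div_mul_add_le_div_mul_add {b c x y : ℝ} (hb : 0 ≤ b) (hc : 0 < c)
    (hx : 0 ≤ x) (hxy : x ≤ y) :
    x / (b * x + c) ≤ y / (b * y + c) := by
  have hy : 0 ≤ y := hx.trans hxy
  rw [div_le_div_iff₀ (by positivity) (by positivity)]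
  nlinarith [mul_le_mul_of_nonneg_left hxy hc.le]

theorem stochastic_case1_bound_general
    (ℓmin ℓmax : ℝ) (hℓmin : 0 < ℓmin) (hle : ℓmin ≤ ℓmax)
    (ρ : ℝ) (hρ : ρ = ℓmax / ℓmin)
    (γ : ℝ) (hγ1 : 1 ≤ γ)
    (m s : ℝ) (hm : ρ < m) (hs0 : 0 ≤ s) (hsm : s ≤ m) :
    0 < (s / γ - 1) * ℓmax + m * ℓmin ∧
    0 < m * (ρ + γ) - ρ * γ ∧
    (s * ℓmin) / ((s / γ - 1) * ℓmax + m * ℓmin) ≤ (m * γ) / (m * (ρ + γ) - ρ * γ) := by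
  have hγ0 : 0 < γ := one_pos.trans_le hγ1
  have hρ1 : 1 ≤ ρ := hρ ▸ (one_le_div hℓmin).2 hle
  have hℓmax : ℓmax = ρ * ℓmin := by rw [hρ, div_mul_cancel₀ _ hℓmin.ne']
  have hb : 0 ≤ ρ / γ := div_nonneg (zero_le_one.trans hρ1) hγ0.le
  have hc : 0 < m - ρ := sub_pos.2 hm
  have hD1 : (s / γ - 1) * ℓmax + m * ℓmin = (ρ / γ * s + (m - ρ)) * ℓmin := by
    rw [hℓmax]; ring
  have hD2 : m * (ρ + γ) - ρ * γ = (ρ / γ * m + (m - ρ)) * γ := by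
    field_simp; ring
  have hden : ∀ x, 0 ≤ x → 0 < ρ / γ * x + (m - ρ) := fun x hx =>
    add_pos_of_nonneg_of_pos (mul_nonneg hb hx) hc
  refine ⟨hD1 ▸ mul_pos (hden s hs0) hℓmin, hD2 ▸ mul_pos (hden m (hs0.trans hsm)) hγ0, ?_⟩
  rw [hD1, hD2, mul_div_mul_right _ _ hℓmin.ne', mul_div_mul_right _ _ hγ0.ne']
  exact div_mul_add_le_div_mul_add hb hc hs0 hsm

/-- Case 1 of the stochastic-arrivals upper bound with `p < q`: the throughput bound
`(s·ℓmin)/((s/γ̄ − 1)·ℓmax + m·ℓmin)` is maximized at `s = m`, where it equals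
`(m·γ̄)/(m·(ρ + γ̄) − ρ·γ̄)`; moreover both denominators are positive. -/
theorem stochastic_case1_bound
    (ℓmin ℓmax : ℝ) (hℓmin : 0 < ℓmin) (hle : ℓmin ≤ ℓmax)
    (ρ : ℝ) (hρ : ρ = ℓmax / ℓmin)
    (γ : ℝ) (hγ : γ = (⌊ρ⌋ : ℝ)) (hγ1 : 1 ≤ γ)
    (m s : ℝ) (hm : ρ < m) (hs0 : 0 ≤ s) (hsm : s ≤ m) :
    0 < (s / γ - 1) * ℓmax + m * ℓmin ∧
    0 < m * (ρ + γ) - ρ * γ ∧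
    (s * ℓmin) / ((s / γ - 1) * ℓmax + m * ℓmin) ≤ (m * γ) / (m * (ρ + γ) - ρ * γ) :=
  stochastic_case1_bound_general ℓmin ℓmax hℓmin hle ρ hρ γ hγ1 m s hm hs0 hsm
end
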